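/- arXiv:0910.4760 — 5 statements merged into one kernel-verified Lean document; each statement's English description precedes it below -/
import Mathlib

section
/- Let (S,+,*) be a ringoid with associative and commutative multiplication. If (S,+,*) is ideal-simple, then one of the following holds: (i) |S*S| = 1; (ii) (S,*) is a group; (iii) there is a multiplicatively absorbing element o ∈ S such that (S∖{o},*) is a group. -/
theorem simple_ringoids_stmt1 (S : Type*) [Nonempty S] (add mul : S → S → S)
    (distribL : ∀ a b c : S, mul a (add b c) = add (mul a b) (mul a c))
    (distribR : ∀ a b c : S, mul (add a b) c = add (mul a c) (mul b c))
    (massoc : ∀ a b c : S, mul (mul a b) c = mul a (mul b c))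
    (mcomm : ∀ a b : S, mul a b = mul b a)
    (hsimple : ∀ A : Set S, A.Nonempty →
      (∀ a ∈ A, ∀ b ∈ A, add a b ∈ A) →
      (∀ s : S, ∀ a ∈ A, mul s a ∈ A) →
      (∀ a ∈ A, ∀ s : S, mul a s ∈ A) →
      A ≠ Set.univ → A.Subsingleton) :
    (∃ c : S, ∀ a b : S, mul a b = c) ∨
    (∃ e : S, (∀ x : S, mul e x = x ∧ mul x e = x) ∧
      ∀ x : S, ∃ y : S, mul x y = e ∧ mul y x = e) ∨
    (∃ o : S, (∀ x : S, mul o x = o ∧ mul x o = o) ∧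
      ∃ e : S, e ≠ o ∧ (∀ x : S, x ≠ o → mul e x = x ∧ mul x e = x) ∧
        ∀ x : S, x ≠ o → ∃ y : S, y ≠ o ∧ mul x y = e ∧ mul y x = e) := by
  classical
  obtain ⟨a0⟩ := ‹Nonempty S›
  -- If a row of the multiplication table is non-constant, then a divides everything.
  have hdiv : ∀ a : S, (∃ y z : S, mul a y ≠ mul a z) → ∀ b : S, ∃ s : S, mul a s = b := by
    intro a ha b
    obtain ⟨y, z, hyz⟩ := ha
    by_contra hb
    have hne : {x : S | ∃ s, mul a s = x} ≠ Set.univ := by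
      intro h
      exact hb (Set.eq_univ_iff_forall.mp h b)
    have hsub := hsimple {x | ∃ s, mul a s = x} ⟨mul a y, y, rfl⟩
      (by rintro x ⟨s, rfl⟩ x' ⟨t, rfl⟩; exact ⟨add s t, distribL a s t⟩)
      (by rintro s x ⟨t, rfl⟩; exact ⟨mul s t, by rw [← massoc, mcomm a s, massoc]⟩)
      (by rintro x ⟨t, rfl⟩ s; exact ⟨mul t s, (massoc a t s).symm⟩)
      hne
    exact hyz (hsub ⟨y, rfl⟩ ⟨z, rfl⟩)
  by_cases hK : ∃ o : S, ∀ y z : S, mul o y = mul o z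
  · obtain ⟨o, ho⟩ := hK
    by_cases hKU : {x : S | ∀ y z : S, mul x y = mul x z} = Set.univ
    · -- every row constant: all products equal
      left
      refine ⟨mul a0 a0, fun a b => ?_⟩
      have ha : ∀ y z : S, mul a y = mul a z := Set.eq_univ_iff_forall.mp hKU a
      have ha0 : ∀ y z : S, mul a0 y = mul a0 z := Set.eq_univ_iff_forall.mp hKU a0
      calc mul a b = mul a a0 := ha b a0
        _ = mul a0 a := mcomm a a0
        _ = mul a0 a0 := ha0 a a0
    · have hsub := hsimple {x : S | ∀ y z : S, mul x y = mul x z} ⟨o, ho⟩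
        (by
          intro x hx x' hx' y z
          rw [distribR, distribR, hx y z, hx' y z])
        (by
          intro s x hx y z
          rw [massoc, massoc, hx y z])
        (by
          intro x hx s y z
          rw [massoc, massoc, hx (mul s y) (mul s z)])
        hKU
      -- o is absorbing
      have hoabs : ∀ x : S, mul o x = o := by
        intro x
        have hmem : mul o x ∈ {x : S | ∀ y z : S, mul x y = mul x z} := by
          intro y z
          rw [massoc, massoc, ho (mul x y) (mul x z)]
        exact hsub hmem ho
      have hnotK : ∀ x : S, x ≠ o → ∃ y z : S, mul x y ≠ mul x z := by
        intro x hx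
        by_contra h
        push_neg at h
        exact hx (hsub h ho)
      by_cases hall : ∀ x : S, x = o
      · left
        exact ⟨o, fun a b => by rw [hall a, hall b, hoabs o]⟩
      · push_neg at hall
        obtain ⟨a, ha⟩ := hall
        right; right
        refine ⟨o, fun x => ⟨hoabs x, (mcomm x o).trans (hoabs x)⟩, ?_⟩
        obtain ⟨e, he⟩ := hdiv a (hnotK a ha) a
        have heo : e ≠ o := by
          intro h
          rw [h, mcomm, hoabs] at he
          exact ha he.symm
        have hid : ∀ x : S, x ≠ o → mul e x = x := by
          intro x hx
          obtain ⟨s, hs⟩ := hdiv a (hnotK a ha) x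
          calc mul e x = mul e (mul a s) := by rw [hs]
            _ = mul (mul e a) s := (massoc e a s).symm
            _ = mul (mul a e) s := by rw [mcomm e a]
            _ = mul a s := by rw [he]
            _ = x := hs
        refine ⟨e, heo, fun x hx => ⟨hid x hx, (mcomm x e).trans (hid x hx)⟩, ?_⟩
        intro x hx
        obtain ⟨y, hy⟩ := hdiv x (hnotK x hx) e
        have hyo : y ≠ o := by
          intro h
          rw [h, mcomm, hoabs] at hy
          exact heo hy.symm
        exact ⟨y, hyo, hy, (mcomm y x).trans hy⟩
  · -- no constant row: group
    push_neg at hK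
    right; left
    have hd : ∀ a b : S, ∃ s : S, mul a s = b := fun a => hdiv a (hK a)
    obtain ⟨e, he⟩ := hd a0 a0
    have hid : ∀ x : S, mul e x = x := by
      intro x
      obtain ⟨s, hs⟩ := hd a0 x
      calc mul e x = mul e (mul a0 s) := by rw [hs]
        _ = mul (mul e a0) s := (massoc e a0 s).symm
        _ = mul (mul a0 e) s := by rw [mcomm e a0]
        _ = mul a0 s := by rw [he]
        _ = x := hs
    refine ⟨e, fun x => ⟨hid x, (mcomm x e).trans (hid x)⟩, ?_⟩
    intro x
    obtain ⟨y, hy⟩ := hd x e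
    exact ⟨y, hy, (mcomm y x).trans hy⟩
end

section
/- Let (S,∘) be a finite groupoid with transitive automorphism group. Then the common cardinality n_l of {x | s∘x = x} equals the common cardinality a_r of {x | x∘s = s}, and the common cardinality a_l of {x | s∘x = s} equals the common cardinality n_r of {x | x∘s = x}. -/
open Finset

theorem simple_ringoids_stmt8 (S : Type*) [Finite S] (op : S → S → S)
    (htrans : ∀ s t : S, ∃ φ : S ≃ S,
      (∀ x y : S, φ (op x y) = op (φ x) (φ y)) ∧ φ s = t) :
    ∀ s t : S,
      Nat.card {x : S // op s x = x} = Nat.card {x : S // op x t = t} ∧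
      Nat.card {x : S // op s x = s} = Nat.card {x : S // op x t = x} := by
  classical
  have := Fintype.ofFinite S
  -- invariance lemmas
  have inv_nl : ∀ s t : S, Nat.card {x : S // op s x = x} = Nat.card {x : S // op t x = x} := by
    intro s t
    obtain ⟨φ, hφ, hst⟩ := htrans s t
    refine Nat.card_congr (Equiv.subtypeEquiv φ fun x => ?_)
    constructor
    · intro hx; rw [← hst, ← hφ, hx]
    · intro hx; apply φ.injective; rw [hφ, hst, hx]
  have inv_ar : ∀ s t : S, Nat.card {x : S // op x s = s} = Nat.card {x : S // op x t = t} := by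
    intro s t
    obtain ⟨φ, hφ, hst⟩ := htrans s t
    refine Nat.card_congr (Equiv.subtypeEquiv φ fun x => ?_)
    constructor
    · intro hx; rw [← hst, ← hφ, hx, hst]
    · intro hx; apply φ.injective; rw [hφ, hst, hx]
  have inv_al : ∀ s t : S, Nat.card {x : S // op s x = s} = Nat.card {x : S // op t x = t} := by
    intro s t
    obtain ⟨φ, hφ, hst⟩ := htrans s t
    refine Nat.card_congr (Equiv.subtypeEquiv φ fun x => ?_)
    constructor
    · intro hx; rw [← hst, ← hφ, hx, hst]
    · intro hx; apply φ.injective; rw [hφ, hst, hx]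
  have inv_nr : ∀ s t : S, Nat.card {x : S // op x s = x} = Nat.card {x : S // op x t = x} := by
    intro s t
    obtain ⟨φ, hφ, hst⟩ := htrans s t
    refine Nat.card_congr (Equiv.subtypeEquiv φ fun x => ?_)
    constructor
    · intro hx; rw [← hst, ← hφ, hx]
    · intro hx; apply φ.injective; rw [hφ, hst, hx]
  have key : ∀ (p : S → S → Prop) [DecidablePred fun q : S × S => p q.1 q.2],
      ∑ s : S, Nat.card {x : S // p s x} = ∑ x : S, Nat.card {s : S // p s x} := by
    intro p _
    have h1 : ∀ s : S, Nat.card {x : S // p s x} = ∑ x : S, if p s x then 1 else 0 := by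
      intro s
      rw [Nat.card_eq_fintype_card, Fintype.card_subtype, Finset.card_filter]
    have h2 : ∀ x : S, Nat.card {s : S // p s x} = ∑ s : S, if p s x then 1 else 0 := by
      intro x
      rw [Nat.card_eq_fintype_card, Fintype.card_subtype, Finset.card_filter]
    simp only [h1, h2]
    exact Finset.sum_comm
  intro s t
  have hpos : 0 < Fintype.card S := by
    have : Nonempty S := ⟨s⟩
    exact Fintype.card_pos
  constructor
  · have e1 : Nat.card {x : S // op s x = x} * Fintype.card S
        = ∑ s' : S, Nat.card {x : S // op s' x = x} := by
      rw [Finset.sum_congr rfl (fun s' _ => inv_nl s' s : ∀ s' ∈ univ, Nat.card {x : S // op s' x = x} = Nat.card {x : S // op s x = x}), Finset.sum_const, smul_eq_mul, mul_comm, Finset.card_univ]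
    have e2 : ∑ x : S, Nat.card {s' : S // op s' x = x}
        = Nat.card {x : S // op x t = t} * Fintype.card S := by
      rw [Finset.sum_congr rfl (fun x _ => inv_ar x t : ∀ x ∈ univ, Nat.card {s' : S // op s' x = x} = Nat.card {s' : S // op s' t = t}), Finset.sum_const, smul_eq_mul, mul_comm, Finset.card_univ]
    have := e1.trans ((key (fun a b => op a b = b)).trans e2)
    exact Nat.eq_of_mul_eq_mul_right hpos this
  · have e1 : Nat.card {x : S // op s x = s} * Fintype.card S
        = ∑ s' : S, Nat.card {x : S // op s' x = s'} := by
      rw [Finset.sum_congr rfl (fun s' _ => inv_al s' s : ∀ s' ∈ univ, Nat.card {x : S // op s' x = s'} = Nat.card {x : S // op s x = s}), Finset.sum_const, smul_eq_mul, mul_comm, Finset.card_univ]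
    have e2 : ∑ x : S, Nat.card {s' : S // op s' x = s'}
        = Nat.card {x : S // op x t = x} * Fintype.card S := by
      rw [Finset.sum_congr rfl (fun x _ => inv_nr x t : ∀ x ∈ univ, Nat.card {s' : S // op s' x = s'} = Nat.card {s' : S // op s' t = s'}), Finset.sum_const, smul_eq_mul, mul_comm, Finset.card_univ]
    have := e1.trans ((key (fun a b => op a b = a)).trans e2)
    exact Nat.eq_of_mul_eq_mul_right hpos this
end

section
/- Let (S,+,*) be a semiring. Define a ≼ b iff there exist n ≥ 1 and x ∈ S with nb = x + a, and let ρ := ≼ ∩ ≼⁻¹. Then ρ is a congruence of the semiring (S,+,*), and ρ(a, 2a) holds for all a ∈ S. -/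
theorem simple_ringoids_stmt11 (S : Type*) [Nonempty S] (add mul : S → S → S)
    (distribL : ∀ a b c : S, mul a (add b c) = add (mul a b) (mul a c))
    (distribR : ∀ a b c : S, mul (add a b) c = add (mul a c) (mul b c))
    (haddassoc : ∀ a b c : S, add (add a b) c = add a (add b c))
    (haddcomm : ∀ a b : S, add a b = add b a)
    (smul : ℕ → S → S)
    (hsmul1 : ∀ a : S, smul 1 a = a)
    (hsmulsucc : ∀ n : ℕ, ∀ a : S, smul (n + 1) a = add (smul n a) a) :
    let le : S → S → Prop := fun a b => ∃ n : ℕ, 1 ≤ n ∧ ∃ x : S, smul n b = add x a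
    let r : S → S → Prop := fun a b => le a b ∧ le b a
    Equivalence r ∧
    (∀ x a b : S, r a b →
      r (add x a) (add x b) ∧ r (mul x a) (mul x b) ∧ r (mul a x) (mul b x)) ∧
    (∀ a : S, r a (smul 2 a)) := by
  intro le r
  -- smul distributes over add
  have hsmul_add : ∀ n : ℕ, 1 ≤ n → ∀ a b : S,
      smul n (add a b) = add (smul n a) (smul n b) := by
    intro n hn
    induction n with
    | zero => omega
    | succ m ih =>
      intro a b
      rcases Nat.eq_zero_or_pos m with hm | hm
      · subst hm; simp [hsmul1]
      · have h1 := ih hm a b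
        rw [hsmulsucc, h1, hsmulsucc, hsmulsucc]
        rw [haddassoc, haddassoc]
        congr 1
        rw [← haddassoc, ← haddassoc, haddcomm (smul m b) a]
  -- additivity in n
  have hadd_smul : ∀ m : ℕ, 1 ≤ m → ∀ n : ℕ, 1 ≤ n → ∀ a : S,
      smul (n + m) a = add (smul n a) (smul m a) := by
    intro m hm
    induction m with
    | zero => omega
    | succ k ih =>
      intro n hn a
      rcases Nat.eq_zero_or_pos k with hk | hk
      · subst hk; rw [hsmulsucc, hsmul1]
      · have h1 := ih hk n hn a
        rw [show n + (k + 1) = (n + k) + 1 by ring, hsmulsucc, h1, hsmulsucc,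
          haddassoc]
  -- multiplicativity in n
  have hmul_smul : ∀ n : ℕ, 1 ≤ n → ∀ m : ℕ, 1 ≤ m → ∀ a : S,
      smul (n * m) a = smul n (smul m a) := by
    intro n hn
    induction n with
    | zero => omega
    | succ k ih =>
      intro m hm a
      rcases Nat.eq_zero_or_pos k with hk | hk
      · subst hk; simp [hsmul1]
      · have h1 := ih hk m hm a
        rw [show (k + 1) * m = k * m + m by ring,
          hadd_smul m hm (k * m) (Nat.one_le_iff_ne_zero.mpr (by positivity)) a,
          h1, hsmulsucc]
  -- smul commutes with left/right multiplication
  have hsmul_mulL : ∀ n : ℕ, 1 ≤ n → ∀ x a : S,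
      mul x (smul n a) = smul n (mul x a) := by
    intro n hn
    induction n with
    | zero => omega
    | succ k ih =>
      intro x a
      rcases Nat.eq_zero_or_pos k with hk | hk
      · subst hk; simp [hsmul1]
      · rw [hsmulsucc, distribL, ih hk x a, hsmulsucc]
  have hsmul_mulR : ∀ n : ℕ, 1 ≤ n → ∀ x a : S,
      mul (smul n a) x = smul n (mul a x) := by
    intro n hn
    induction n with
    | zero => omega
    | succ k ih =>
      intro x a
      rcases Nat.eq_zero_or_pos k with hk | hk
      · subst hk; simp [hsmul1]
      · rw [hsmulsucc, distribR, ih hk x a, hsmulsucc]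
  have hrefl : ∀ a : S, le a a := by
    intro a
    exact ⟨2, by norm_num, a, by rw [hsmulsucc, hsmul1]⟩
  have htrans : ∀ a b c : S, le a b → le b c → le a c := by
    rintro a b c ⟨n, hn, x, hx⟩ ⟨m, hm, y, hy⟩
    refine ⟨n * m, Nat.one_le_iff_ne_zero.mpr (by positivity), add (smul n y) x, ?_⟩
    rw [hmul_smul n hn m hm c, hy, hsmul_add n hn, hx, ← haddassoc]
  -- le is compatible with add and mul
  have hle_add : ∀ x a b : S, le a b → le (add x a) (add x b) := by
    rintro x a b ⟨n, hn, y, hy⟩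
    -- bump n to n+1 ≥ 2
    have hy' : smul (n + 1) b = add (add y b) a := by
      rw [hsmulsucc, hy, haddassoc, haddcomm a b, ← haddassoc]
    refine ⟨n + 1, by omega, add (smul n x) (add y b), ?_⟩
    rw [hsmul_add (n + 1) (by omega), hy',
      show (n : ℕ) + 1 = n + 1 by rfl, hsmulsucc n x]
    rw [haddassoc (smul n x) x (add (add y b) a), ← haddassoc x (add y b) a,
      haddcomm x (add y b), haddassoc (add y b) x a,
      ← haddassoc (smul n x) (add y b) (add x a)]
  have hle_mulL : ∀ x a b : S, le a b → le (mul x a) (mul x b) := by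
    rintro x a b ⟨n, hn, y, hy⟩
    refine ⟨n, hn, mul x y, ?_⟩
    rw [← hsmul_mulL n hn, hy, distribL]
  have hle_mulR : ∀ x a b : S, le a b → le (mul a x) (mul b x) := by
    rintro x a b ⟨n, hn, y, hy⟩
    refine ⟨n, hn, mul y x, ?_⟩
    rw [← hsmul_mulR n hn, hy, distribR]
  refine ⟨⟨fun a => ⟨hrefl a, hrefl a⟩, fun h => ⟨h.2, h.1⟩,
    fun h1 h2 => ⟨htrans _ _ _ h1.1 h2.1, htrans _ _ _ h2.2 h1.2⟩⟩,
    fun x a b h => ⟨⟨hle_add x a b h.1, hle_add x b a h.2⟩,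
      ⟨hle_mulL x a b h.1, hle_mulL x b a h.2⟩,
      ⟨hle_mulR x a b h.1, hle_mulR x b a h.2⟩⟩,
    fun a => ⟨⟨1, le_refl 1, a, by rw [hsmul1, hsmulsucc, hsmul1]⟩,
      ⟨3, by norm_num, a, ?_⟩⟩⟩
  rw [show (3 : ℕ) = 2 + 1 by rfl, hsmulsucc, hsmulsucc, hsmul1, haddcomm]
end

section
/- Let (S,+,*) be a congruence-simple semiring with an additively neutral element 0. Then either (S,+) is idempotent (a+a = a for all a) or (S,+) is a group. -/
private def sm {S : Type*} (add : S → S → S) : ℕ → S → S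
  | 0, a => a
  | n+1, a => add a (sm add n a)

theorem simple_ringoids_stmt12 (S : Type*) (add mul : S → S → S) (zero : S)
    (distribL : ∀ a b c : S, mul a (add b c) = add (mul a b) (mul a c))
    (distribR : ∀ a b c : S, mul (add a b) c = add (mul a c) (mul b c))
    (haddassoc : ∀ a b c : S, add (add a b) c = add a (add b c))
    (haddcomm : ∀ a b : S, add a b = add b a)
    (hzero : ∀ x : S, add zero x = x ∧ add x zero = x)
    (hsimple : ∀ r : S → S → Prop, Equivalence r →
      (∀ x a b : S, r a b → r (add x a) (add x b)) →
      (∀ x a b : S, r a b → r (mul x a) (mul x b)) →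
      (∀ x a b : S, r a b → r (mul a x) (mul b x)) →
      (∀ a b : S, r a b → a = b) ∨ (∀ a b : S, r a b)) :
    (∀ a : S, add a a = a) ∨
    (∀ x : S, ∃ y : S, add x y = zero ∧ add y x = zero) := by
  -- abbreviations
  have smdist : ∀ n (a b : S), sm add n (add a b) = add (sm add n a) (sm add n b) := by
    intro n
    induction n with
    | zero => intro a b; rfl
    | succ n ih =>
      intro a b
      show add (add a b) (sm add n (add a b)) = add (add a (sm add n a)) (add b (sm add n b))
      rw [ih]
      -- pure AC rearrangement
      rw [haddassoc, haddassoc]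
      congr 1
      rw [← haddassoc, ← haddassoc, haddcomm b (sm add n a)]
  have ac4 : ∀ a b c d : S, add (add a b) (add c d) = add (add b c) (add a d) := by
    intro a b c d
    rw [← haddassoc, haddassoc a b c, haddcomm a (add b c), haddassoc]
  have smlead : ∀ n (a : S), ∃ t, sm add n a = add a t := by
    intro n a
    cases n with
    | zero => exact ⟨zero, (hzero a).2.symm⟩
    | succ n => exact ⟨sm add n a, rfl⟩
  have smadd : ∀ n m (a : S), add (sm add n a) (sm add m a) = sm add (n + m + 1) a := by
    intro n m a
    induction n with
    | zero =>
      show add a (sm add m a) = sm add (0 + m + 1) a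
      rw [Nat.zero_add]
      rfl
    | succ n ih =>
      show add (add a (sm add n a)) (sm add m a) = sm add (n + 1 + m + 1) a
      rw [haddassoc, ih]
      have : n + 1 + m + 1 = (n + m + 1) + 1 := by omega
      rw [this]
      rfl
  have smcomp : ∀ n m (a : S), ∃ k, sm add n (sm add m a) = sm add k a := by
    intro n m a
    induction n with
    | zero => exact ⟨m, rfl⟩
    | succ n ih =>
      obtain ⟨k, hk⟩ := ih
      refine ⟨m + k + 1, ?_⟩
      show add (sm add m a) (sm add n (sm add m a)) = _
      rw [hk, smadd]
  have smmulL : ∀ n (c a : S), mul c (sm add n a) = sm add n (mul c a) := by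
    intro n c a
    induction n with
    | zero => rfl
    | succ n ih =>
      show mul c (add a (sm add n a)) = add (mul c a) (sm add n (mul c a))
      rw [distribL, ih]
  have smmulR : ∀ n (c a : S), mul (sm add n a) c = sm add n (mul a c) := by
    intro n c a
    induction n with
    | zero => rfl
    | succ n ih =>
      show mul (add a (sm add n a)) c = add (mul a c) (sm add n (mul a c))
      rw [distribR, ih]
  set r : S → S → Prop := fun a b =>
    (∃ n x, sm add n b = add x a) ∧ (∃ m y, sm add m a = add y b) with hr
  have hrefl : ∀ a : S, r a a := by
    intro a
    exact ⟨⟨0, zero, (hzero a).1.symm⟩, ⟨0, zero, (hzero a).1.symm⟩⟩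
  have hsymm : ∀ {a b : S}, r a b → r b a := fun h => ⟨h.2, h.1⟩
  have htrans : ∀ {a b c : S}, r a b → r b c → r a c := by
    intro a b c hab hbc
    constructor
    · obtain ⟨n, x, hn⟩ := hab.1
      obtain ⟨m, y, hm⟩ := hbc.1
      obtain ⟨k, hk⟩ := smcomp n m c
      refine ⟨k, add (sm add n y) x, ?_⟩
      rw [← hk, hm, smdist, hn, ← haddassoc]
    · obtain ⟨n, x, hn⟩ := hab.2
      obtain ⟨m, y, hm⟩ := hbc.2
      obtain ⟨k, hk⟩ := smcomp m n a
      refine ⟨k, add (sm add m x) y, ?_⟩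
      rw [← hk, hn, smdist, hm, ← haddassoc]
  have haddc : ∀ x a b : S, r a b → r (add x a) (add x b) := by
    intro x a b hab
    have key : ∀ (u v : S), (∃ n w, sm add n v = add w u) →
        (∃ n w, sm add n (add x v) = add w (add x u)) := by
      rintro u v ⟨n, w, hn⟩
      obtain ⟨t, ht⟩ := smlead n x
      refine ⟨n, add t w, ?_⟩
      rw [smdist, hn, ht, ac4]
    exact ⟨key a b hab.1, key b a hab.2⟩
  have hmulL : ∀ x a b : S, r a b → r (mul x a) (mul x b) := by
    intro x a b hab
    have key : ∀ (u v : S), (∃ n w, sm add n v = add w u) →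
        (∃ n w, sm add n (mul x v) = add w (mul x u)) := by
      rintro u v ⟨n, w, hn⟩
      exact ⟨n, mul x w, by rw [← smmulL, hn, distribL]⟩
    exact ⟨key a b hab.1, key b a hab.2⟩
  have hmulR : ∀ x a b : S, r a b → r (mul a x) (mul b x) := by
    intro x a b hab
    have key : ∀ (u v : S), (∃ n w, sm add n v = add w u) →
        (∃ n w, sm add n (mul v x) = add w (mul u x)) := by
      rintro u v ⟨n, w, hn⟩
      exact ⟨n, mul w x, by rw [← smmulR, hn, distribR]⟩
    exact ⟨key a b hab.1, key b a hab.2⟩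
  rcases hsimple r ⟨hrefl, hsymm, htrans⟩ haddc hmulL hmulR with h | h
  · left
    intro a
    have : r a (add a a) := by
      constructor
      · exact ⟨0, a, rfl⟩
      · refine ⟨2, a, ?_⟩
        show add a (add a a) = add a (add a a)
        rfl
    exact (h a (add a a) this).symm
  · right
    intro a
    have hz : ∀ n, sm add n zero = zero := by
      intro n
      induction n with
      | zero => rfl
      | succ n ih => show add zero (sm add n zero) = zero; rw [ih]; exact (hzero zero).1
    obtain ⟨⟨n, x, hn⟩, -⟩ := h a zero
    rw [hz] at hn
    exact ⟨x, by rw [haddcomm]; exact hn.symm, hn.symm⟩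
end

section
/- Let (S,+,*) be a finite semiring with idempotent addition, let ∞ := ∑_{a∈S} a (the top element in the order a ≤ b iff a+b = b), and let M be the set of minimal elements of (S,≤). Then S is k-ideal-simple if and only if for all x ∈ S∖(M ∪ {∞}), either ∞*x ≰ x or x*∞ ≰ x. -/
lemma max_elt_of_closed {S : Type*} [Finite S] (add : S → S → S)
    (haddassoc : ∀ a b c : S, add (add a b) c = add a (add b c))
    (haddcomm : ∀ a b : S, add a b = add b a)
    (hidem : ∀ a : S, add a a = a)
    (A : Set S) (hne : A.Nonempty)
    (hclosed : ∀ a ∈ A, ∀ b ∈ A, add a b ∈ A) :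
    ∃ x ∈ A, ∀ a ∈ A, add a x = x := by
  letI : PartialOrder S :=
    { le := fun a b => add a b = b
      le_refl := hidem
      le_trans := fun a b c hab hbc => by
        show add a c = c
        rw [← hbc, ← haddassoc, hab]
      le_antisymm := fun a b hab hba => by
        show a = b
        rw [← hba, haddcomm, hab] }
  obtain ⟨x, hxA, hmax⟩ := Set.Finite.exists_maximalFor id A (Set.toFinite A) hne
  refine ⟨x, hxA, fun a ha => ?_⟩
  have h1 : add x (add a x) = add a x := by
    rw [haddcomm a x, ← haddassoc, hidem]
  exact le_antisymm (hmax (j := add a x) (hclosed a ha x hxA) h1) h1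

theorem simple_ringoids_stmt18 (S : Type*) [Finite S] [Nonempty S] (add mul : S → S → S)
    (distribL : ∀ a b c : S, mul a (add b c) = add (mul a b) (mul a c))
    (distribR : ∀ a b c : S, mul (add a b) c = add (mul a c) (mul b c))
    (haddassoc : ∀ a b c : S, add (add a b) c = add a (add b c))
    (haddcomm : ∀ a b : S, add a b = add b a)
    (hidem : ∀ a : S, add a a = a)
    (top : S) (htop : ∀ a : S, add a top = top) :
    let le : S → S → Prop := fun a b => add a b = b
    ((∀ A : Set S, A.Nonempty →
        (∀ a ∈ A, ∀ b ∈ A, add a b ∈ A) →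
        (∀ s : S, ∀ a ∈ A, mul s a ∈ A) →
        (∀ a ∈ A, ∀ s : S, mul a s ∈ A) →
        (∀ a ∈ A, ∀ x : S, x ∉ A → add a x ∉ A) →
        A ≠ Set.univ → A.Subsingleton) ↔
      (∀ x : S, (∃ y : S, le y x ∧ y ≠ x) → x ≠ top →
        ¬ le (mul top x) x ∨ ¬ le (mul x top) x)) := by
  intro le
  have htrans : ∀ a b c : S, add a b = b → add b c = c → add a c = c := by
    intro a b c hab hbc
    rw [← hbc, ← haddassoc, hab]
  constructor
  · -- simple → condition
    rintro hsimple x ⟨y, hyx, hyne⟩ hxtop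
    by_contra hcon
    push_neg at hcon
    obtain ⟨h1, h2⟩ := hcon
    -- h1 : le (mul top x) x,  h2 : le (mul x top) x
    set A : Set S := {a | add a x = x} with hAdef
    have hxA : x ∈ A := hidem x
    have hsub := hsimple A ⟨x, hxA⟩
      (by
        intro a ha b hb
        show add (add a b) x = x
        rw [haddassoc, hb, ha])
      (by
        intro s a ha
        show add (mul s a) x = x
        have e1 : add (mul s a) (mul s x) = mul s x := by
          rw [← distribL, ha]
        have e2 : add (mul s x) (mul top x) = mul top x := by
          rw [← distribR, htop s]
        exact htrans _ _ _ e1 (htrans _ _ _ e2 h1))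
      (by
        intro a ha s
        show add (mul a s) x = x
        have e1 : add (mul a s) (mul x s) = mul x s := by
          rw [← distribR, ha]
        have e2 : add (mul x s) (mul x top) = mul x top := by
          rw [← distribL, htop s]
        exact htrans _ _ _ e1 (htrans _ _ _ e2 h2))
      (by
        intro a ha u hu hau
        apply hu
        have h3 : add u (add a u) = add a u := by
          rw [haddcomm a u, ← haddassoc, hidem]
        exact htrans _ _ _ h3 hau)
      (by
        intro hA
        apply hxtop
        have htA : top ∈ A := hA ▸ Set.mem_univ top
        have : add top x = x := htA
        rw [haddcomm, htop] at this
        exact this.symm)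
    exact hyne (hsub hyx hxA)
  · -- condition → simple
    intro hcond A hne hadd hleft hright hk hneuniv a ha b hb
    obtain ⟨x, hxA, hmax⟩ := max_elt_of_closed add haddassoc haddcomm hidem A hne hadd
    have htopA : top ∉ A := by
      intro htA
      apply hneuniv
      ext u
      simp only [Set.mem_univ, iff_true]
      by_contra hu
      exact hk top htA u hu (by rw [haddcomm, htop]; exact htA)
    have hxnetop : x ≠ top := fun h => htopA (h ▸ hxA)
    have h1 : le (mul top x) x := hmax _ (hleft top x hxA)
    have h2 : le (mul x top) x := hmax _ (hright x hxA top)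
    have hnoy : ¬ (∃ y : S, le y x ∧ y ≠ x) := fun h =>
      (hcond x h hxnetop).elim (fun h' => h' h1) (fun h' => h' h2)
    have hax : a = x := by
      by_contra hax
      exact hnoy ⟨a, hmax a ha, hax⟩
    have hbx : b = x := by
      by_contra hbx
      exact hnoy ⟨b, hmax b hb, hbx⟩
    rw [hax, hbx]
end
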